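/- arXiv:2309.02032 — 3 statements merged into one kernel-verified Lean document; each statement's English description precedes it below -/
import Mathlib

section
/- Let M be a positive semidefinite (not necessarily symmetric) n×n real matrix and q ∈ ℝⁿ. If z̄ is a solution of the linear complementarity problem LCP(q, M), i.e., z̄ ≥ 0, q + M z̄ ≥ 0, z̄ᵀ(q + M z̄) = 0, then any z satisfying z ≥ 0, q + M z ≥ 0, qᵀ(z − z̄) = 0, and (M + Mᵀ)(z − z̄) = 0 is also a solution of LCP(q, M). -/
open scoped Matrix

/-- If `z̄` solves the monotone LCP(q, M), then any point of the polyhedron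
`{z ≥ 0 : q + Mz ≥ 0, qᵀ(z − z̄) = 0, (M + Mᵀ)(z − z̄) = 0}` also solves it. -/
theorem lcp_polyhedron_subset_solutions {n : ℕ}
    (M : Matrix (Fin n) (Fin n) ℝ) (q : Fin n → ℝ)
    (hMpsd : ∀ x : Fin n → ℝ, 0 ≤ x ⬝ᵥ M.mulVec x)
    (zbar : Fin n → ℝ)
    (hzbar_nonneg : ∀ i, 0 ≤ zbar i)
    (hzbar_feas : ∀ i, 0 ≤ q i + M.mulVec zbar i)
    (hzbar_comp : zbar ⬝ᵥ (q + M.mulVec zbar) = 0)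
    (z : Fin n → ℝ)
    (hz_nonneg : ∀ i, 0 ≤ z i)
    (hz_feas : ∀ i, 0 ≤ q i + M.mulVec z i)
    (hq_orth : q ⬝ᵥ (z - zbar) = 0)
    (hM_eq : (M + M.transpose).mulVec (z - zbar) = 0) :
    z ⬝ᵥ (q + M.mulVec z) = 0 := by
  set d : Fin n → ℝ := z - zbar with hd
  have h1 : M.mulVec d + (M.transpose).mulVec d = 0 := by
    rw [← Matrix.add_mulVec]; exact hM_eq
  have h2 : ∀ v : Fin n → ℝ, v ⬝ᵥ M.mulVec d + v ⬝ᵥ (M.transpose).mulVec d = 0 := by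
    intro v
    rw [← dotProduct_add, h1, dotProduct_zero]
  -- dᵀ Mᵀ d = dᵀ M d
  have htrans : ∀ v : Fin n → ℝ, v ⬝ᵥ (M.transpose).mulVec d = d ⬝ᵥ M.mulVec v := by
    intro v
    rw [Matrix.mulVec_transpose, dotProduct_comm, ← Matrix.dotProduct_mulVec]
  have hdd : d ⬝ᵥ M.mulVec d = 0 := by
    have := h2 d
    rw [htrans d] at this
    linarith
  have hcross : zbar ⬝ᵥ M.mulVec d + d ⬝ᵥ M.mulVec zbar = 0 := by
    have := h2 zbar
    rw [htrans zbar] at this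
    exact this
  have hzsplit : z = zbar + d := by rw [hd]; ring
  have hdq : q ⬝ᵥ d = 0 := hq_orth
  have expand : z ⬝ᵥ (q + M.mulVec z)
      = zbar ⬝ᵥ (q + M.mulVec zbar) + q ⬝ᵥ d
        + (zbar ⬝ᵥ M.mulVec d + d ⬝ᵥ M.mulVec zbar) + d ⬝ᵥ M.mulVec d := by
    rw [hzsplit, Matrix.mulVec_add]
    simp only [add_dotProduct, dotProduct_add, dotProduct_comm q d]
    ring
  rw [expand, hzbar_comp, hdq, hcross, hdd]
  ring
end

section
/- Let M be a positive semidefinite n×n real matrix and q ∈ ℝⁿ. If z̄ and z are both solutions of LCP(q, M) (i.e., both satisfy w ≥ 0, q + M w ≥ 0, wᵀ(q + M w) = 0), then qᵀ(z − z̄) = 0 and (M + Mᵀ)(z − z̄) = 0. -/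
open scoped Matrix
open Matrix

/-!
Write `w(v) = q + M v` and `x = z − z̄`. Since `M x = w(z) − w(z̄)`, complementarity of both solutions
gives `xᵀ M x = −(zᵀ w(z̄) + z̄ᵀ w(z))`, and the right side is `≤ 0` by feasibility. Monotonicity then
forces `xᵀ M x = 0`, so `x` lies in the kernel of the positive semidefinite matrix `M + Mᵀ`, and both
cross terms vanish. Finally `0 = zᵀ (M + Mᵀ) x = zᵀ M x + xᵀ M z`, where `zᵀ M x = zᵀ w(z) − zᵀ w(z̄) = 0`
and `xᵀ M z = xᵀ w(z) − qᵀ x = −qᵀ x`.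
-/

namespace Matrix

variable {ι : Type*} [Fintype ι]

theorem dotProduct_add_transpose_mulVec {R : Type*} [CommSemiring R] (M : Matrix ι ι R)
    (x y : ι → R) : x ⬝ᵥ (M + Mᵀ) *ᵥ y = x ⬝ᵥ M *ᵥ y + y ⬝ᵥ M *ᵥ x := by
  rw [add_mulVec, dotProduct_add, dotProduct_transpose_mulVec]

theorem posSemidef_add_transpose {M : Matrix ι ι ℝ} (hM : ∀ x, 0 ≤ x ⬝ᵥ M *ᵥ x) :
    (M + Mᵀ).PosSemidef :=
  PosSemidef.of_dotProduct_mulVec_nonneg (by simp [IsHermitian, add_comm]) fun x => by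
    simpa [dotProduct_add_transpose_mulVec] using add_nonneg (hM x) (hM x)

theorem add_transpose_mulVec_eq_zero {M : Matrix ι ι ℝ} (hM : ∀ x, 0 ≤ x ⬝ᵥ M *ᵥ x)
    {x : ι → ℝ} (hx : x ⬝ᵥ M *ᵥ x = 0) : (M + Mᵀ) *ᵥ x = 0 :=
  ((posSemidef_add_transpose hM).dotProduct_mulVec_zero_iff x).mp <| by
    simp [dotProduct_add_transpose_mulVec, hx]

end Matrix

section LCP

variable {ι R : Type*} [Fintype ι] [CommRing R] {M : Matrix ι ι R} {q : ι → R}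

theorem mulVec_sub_eq_sub_add_mulVec (M : Matrix ι ι R) (q z zbar : ι → R) :
    M *ᵥ (z - zbar) = (q + M *ᵥ z) - (q + M *ᵥ zbar) := by
  rw [mulVec_sub, add_sub_add_left_eq_sub]

theorem dotProduct_mulVec_sub_eq_neg_cross_terms {z zbar : ι → R}
    (hz : z ⬝ᵥ (q + M *ᵥ z) = 0) (hzbar : zbar ⬝ᵥ (q + M *ᵥ zbar) = 0) :
    (z - zbar) ⬝ᵥ M *ᵥ (z - zbar) = -(z ⬝ᵥ (q + M *ᵥ zbar) + zbar ⬝ᵥ (q + M *ᵥ z)) := by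
  rw [mulVec_sub_eq_sub_add_mulVec M q, sub_dotProduct, dotProduct_sub, dotProduct_sub, hz, hzbar]
  ring

end LCP

/-- Converse direction: two solutions of a monotone LCP satisfy
`qᵀ(z − z̄) = 0` and `(M + Mᵀ)(z − z̄) = 0`. -/
theorem lcp_solutions_subset_polyhedron {n : ℕ}
    (M : Matrix (Fin n) (Fin n) ℝ) (q : Fin n → ℝ)
    (hMpsd : ∀ x : Fin n → ℝ, 0 ≤ x ⬝ᵥ M.mulVec x)
    (zbar z : Fin n → ℝ)
    (hzbar_nonneg : ∀ i, 0 ≤ zbar i)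
    (hzbar_feas : ∀ i, 0 ≤ q i + M.mulVec zbar i)
    (hzbar_comp : zbar ⬝ᵥ (q + M.mulVec zbar) = 0)
    (hz_nonneg : ∀ i, 0 ≤ z i)
    (hz_feas : ∀ i, 0 ≤ q i + M.mulVec z i)
    (hz_comp : z ⬝ᵥ (q + M.mulVec z) = 0) :
    q ⬝ᵥ (z - zbar) = 0 ∧ (M + M.transpose).mulVec (z - zbar) = 0 := by
  have hcross : 0 ≤ z ⬝ᵥ (q + M *ᵥ zbar) := dotProduct_nonneg_of_nonneg hz_nonneg hzbar_feas
  have hcross' : 0 ≤ zbar ⬝ᵥ (q + M *ᵥ z) := dotProduct_nonneg_of_nonneg hzbar_nonneg hz_feas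
  have hquad := dotProduct_mulVec_sub_eq_neg_cross_terms hz_comp hzbar_comp
  have hx : (z - zbar) ⬝ᵥ M *ᵥ (z - zbar) = 0 := le_antisymm (by linarith) (hMpsd _)
  have hker := add_transpose_mulVec_eq_zero hMpsd hx
  refine ⟨?_, hker⟩
  have hzMx : z ⬝ᵥ M *ᵥ (z - zbar) = -(z ⬝ᵥ (q + M *ᵥ zbar)) := by
    rw [mulVec_sub_eq_sub_add_mulVec M q, dotProduct_sub, hz_comp, zero_sub]
  have hxMz : (z - zbar) ⬝ᵥ M *ᵥ z = -(zbar ⬝ᵥ (q + M *ᵥ z)) - q ⬝ᵥ (z - zbar) := by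
    simp only [sub_dotProduct, dotProduct_add, dotProduct_comm q] at hz_comp ⊢
    linarith
  have hsum := dotProduct_add_transpose_mulVec M z (z - zbar)
  rw [hker, dotProduct_zero] at hsum
  linarith
end

section
/- Let M be positive semidefinite and let z̄, z be two solutions of LCP(q, M). Then z̄ᵀ(q + M z) = 0 and zᵀ(q + M z̄) = 0 (cross-complementarity between any two solutions of a monotone LCP). -/
open scoped Matrix

/-- Cross-complementarity: any two solutions of a monotone LCP are
complementary to each other's slack vectors. -/
theorem lcp_cross_complementarity {n : ℕ}
    (M : Matrix (Fin n) (Fin n) ℝ) (q : Fin n → ℝ)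
    (hMpsd : ∀ x : Fin n → ℝ, 0 ≤ x ⬝ᵥ M.mulVec x)
    (zbar z : Fin n → ℝ)
    (hzbar_nonneg : ∀ i, 0 ≤ zbar i)
    (hzbar_feas : ∀ i, 0 ≤ q i + M.mulVec zbar i)
    (hzbar_comp : zbar ⬝ᵥ (q + M.mulVec zbar) = 0)
    (hz_nonneg : ∀ i, 0 ≤ z i)
    (hz_feas : ∀ i, 0 ≤ q i + M.mulVec z i)
    (hz_comp : z ⬝ᵥ (q + M.mulVec z) = 0) :
    zbar ⬝ᵥ (q + M.mulVec z) = 0 ∧ z ⬝ᵥ (q + M.mulVec zbar) = 0 := by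
  have ha : 0 ≤ zbar ⬝ᵥ (q + M.mulVec z) :=
    Finset.sum_nonneg fun i _ => mul_nonneg (hzbar_nonneg i) (hz_feas i)
  have hb : 0 ≤ z ⬝ᵥ (q + M.mulVec zbar) :=
    Finset.sum_nonneg fun i _ => mul_nonneg (hz_nonneg i) (hzbar_feas i)
  have hpsd := hMpsd (z - zbar)
  have hexp : (z - zbar) ⬝ᵥ M.mulVec (z - zbar)
      = z ⬝ᵥ (q + M.mulVec z) + zbar ⬝ᵥ (q + M.mulVec zbar)
        - zbar ⬝ᵥ (q + M.mulVec z) - z ⬝ᵥ (q + M.mulVec zbar) := by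
    rw [Matrix.mulVec_sub]
    simp only [sub_dotProduct, dotProduct_sub, dotProduct_add]
    ring
  rw [hexp, hzbar_comp, hz_comp] at hpsd
  constructor <;> linarith
end
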